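/- Let f, h : ℕ → ℝ → ℝ be sequences of locally integrable functions with germs Φ and Ψ (internal functions on the hyperreals). Assume Φ and Ψ are S-continuous at every p ∈ ℝ, and that Φ⋆↑p = Ψ⋆↑p for every p ∈ ℝ. Then for every test function g, the hyperreal germ of the real sequence n ↦ ∫_ℝ (f n x - h n x) * g x dx is infinitesimal. -/

import Mathlib

open MeasureTheory

/-- The action of an internal function on the hyperreals (a germ of standard
functions) on a hyperreal. -/
noncomputable def hact (Φ : Filter.Germ (Filter.hyperfilter ℕ : Filter ℕ) (ℝ → ℝ))
    (ξ : Hyperreal) : Hyperreal :=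
  Filter.Germ.map₂ (fun f t => f t) Φ ξ

/-- S-continuity of an internal function at a standard point `p`. -/
def SContinuousAt (Φ : Filter.Germ (Filter.hyperfilter ℕ : Filter ℕ) (ℝ → ℝ)) (p : ℝ) : Prop :=
  ∀ ξ : Hyperreal, Hyperreal.Infinitesimal (ξ - ↑p) →
    Hyperreal.Infinitesimal (hact Φ ξ - hact Φ ↑p)

open Filter Hyperreal

lemma ofSeq_sub (a b : ℕ → ℝ) : ofSeq a - ofSeq b = ofSeq (fun n => a n - b n) := rfl

lemma coe_eq_ofSeq (r : ℝ) : (r : ℝ*) = ofSeq (fun _ => r) := rfl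

lemma hact_ofSeq (f : ℕ → ℝ → ℝ) (x : ℕ → ℝ) :
    hact (↑f) (ofSeq x) = ofSeq (fun n => f n (x n)) :=
  Filter.Germ.map₂_coe _ _ _

lemma infinitesimal_ofSeq_iff {a : ℕ → ℝ} :
    (ofSeq a).Infinitesimal ↔
      ∀ r : ℝ, 0 < r → ∀ᶠ n in (hyperfilter ℕ : Filter ℕ), |a n| < r := by
  rw [Hyperreal.infinitesimal_def]
  constructor
  · intro H r hr
    obtain ⟨h1, h2⟩ := H r hr
    have e1 : ∀ᶠ n in hyperfilter ℕ, -r < a n := ofSeq_lt_ofSeq.1 h1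
    have e2 : ∀ᶠ n in hyperfilter ℕ, a n < r := ofSeq_lt_ofSeq.1 h2
    filter_upwards [e1, e2] with n h1 h2 using abs_lt.2 ⟨h1, h2⟩
  · intro H r hr
    have := H r hr
    exact ⟨ofSeq_lt_ofSeq.2 (this.mono fun n hn => (abs_lt.1 hn).1),
      ofSeq_lt_ofSeq.2 (this.mono fun n hn => (abs_lt.1 hn).2)⟩

lemma key_local (f h : ℕ → ℝ → ℝ)
    (hSf : ∀ p : ℝ, SContinuousAt (↑f) p) (hSh : ∀ p : ℝ, SContinuousAt (↑h) p)
    (heq : ∀ p : ℝ, hact (↑f) (↑p) = hact (↑h) (↑p)) (p : ℝ) {eps : ℝ} (heps : 0 < eps) :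
    ∃ δ > (0:ℝ), ∀ᶠ n in (hyperfilter ℕ : Filter ℕ),
      ∀ x : ℝ, |x - p| ≤ δ → |f n x - h n x| ≤ eps := by
  classical
  by_contra hcon
  push_neg at hcon
  set P : ℕ → ℕ → Prop := fun k n =>
    ∃ x : ℝ, |x - p| ≤ 1 / (k + 1 : ℝ) ∧ eps < |f n x - h n x| with hP
  have hA : ∀ k : ℕ, ∀ᶠ n in (hyperfilter ℕ : Filter ℕ), P k n := by
    intro k
    have hδ : (0:ℝ) < 1 / (k + 1 : ℝ) := by positivity
    have := hcon _ hδ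
    refine this.mono fun n hn => ?_
    obtain ⟨x, hx1, hx2⟩ := hn
    exact ⟨x, hx1, hx2⟩
  set K : ℕ → ℕ := fun n => Nat.findGreatest (fun k => P k n) n with hK
  set x' : ℕ → ℝ := fun n => if hn : P (K n) n then hn.choose else p with hx'
  have hx'spec : ∀ k n : ℕ, k ≤ n → P k n →
      |x' n - p| ≤ 1 / (k + 1 : ℝ) ∧ eps < |f n (x' n) - h n (x' n)| := by
    intro k n hkn hPkn
    have hKP : P (K n) n := Nat.findGreatest_spec (P := fun k => P k n) hkn hPkn
    have hkK : k ≤ K n := Nat.le_findGreatest hkn hPkn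
    have : x' n = hKP.choose := by simp only [hx', dif_pos hKP]
    rw [this]
    obtain ⟨h1, h2⟩ := hKP.choose_spec
    refine ⟨h1.trans ?_, h2⟩
    apply one_div_le_one_div_of_le (by positivity)
    exact_mod_cast add_le_add_left (Nat.cast_le.2 hkK) 1
  set ξ : ℝ* := ofSeq x' with hξdef
  have hξ : Infinitesimal (ξ - ↑p) := by
    rw [coe_eq_ofSeq, hξdef, ofSeq_sub, infinitesimal_ofSeq_iff]
    intro r hr
    obtain ⟨k, hk⟩ := exists_nat_one_div_lt hr
    have hge : ∀ᶠ n in (hyperfilter ℕ : Filter ℕ), k ≤ n :=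
      (eventually_ge_atTop k).filter_mono Nat.hyperfilter_le_atTop
    filter_upwards [hA k, hge] with n hPn hkn
    exact lt_of_le_of_lt ((hx'spec k n hkn hPn).1) hk
  have hinf : Infinitesimal (hact (↑f) ξ - hact (↑h) ξ) := by
    have h1 := hSf p ξ hξ
    have h2 := hSh p ξ hξ
    have : hact (↑f) ξ - hact (↑h) ξ =
        (hact (↑f) ξ - hact (↑f) ↑p) - (hact (↑h) ξ - hact (↑h) ↑p) := by
      rw [heq p]; ring
    rw [this, sub_eq_add_neg]
    exact h1.add h2.neg
  rw [hξdef, hact_ofSeq, hact_ofSeq, ofSeq_sub, infinitesimal_ofSeq_iff] at hinf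
  obtain ⟨n, hPn, hlt⟩ := ((hA 0).and (hinf eps heps)).exists
  exact absurd hlt (not_lt.2 (hx'spec 0 n (Nat.zero_le n) hPn).2.le)

lemma key_uniform (f h : ℕ → ℝ → ℝ)
    (hSf : ∀ p : ℝ, SContinuousAt (↑f) p) (hSh : ∀ p : ℝ, SContinuousAt (↑h) p)
    (heq : ∀ p : ℝ, hact (↑f) (↑p) = hact (↑h) (↑p)) {C : Set ℝ} (hC : IsCompact C)
    {eps : ℝ} (heps : 0 < eps) :
    ∀ᶠ n in (hyperfilter ℕ : Filter ℕ), ∀ x ∈ C, |f n x - h n x| ≤ eps := by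
  classical
  have key := fun p : ℝ => key_local f h hSf hSh heq p heps
  choose δ hδ hev using key
  obtain ⟨t, ht⟩ := hC.elim_finite_subcover (fun p : ℝ => Metric.ball p (δ p))
    (fun p => Metric.isOpen_ball)
    (fun x hx => Set.mem_iUnion.2 ⟨x, Metric.mem_ball_self (hδ x)⟩)
  have hall : ∀ᶠ n in (hyperfilter ℕ : Filter ℕ), ∀ p ∈ t,
      ∀ x : ℝ, |x - p| ≤ δ p → |f n x - h n x| ≤ eps :=
    (Filter.eventually_all_finset t).2 fun p _ => hev p
  filter_upwards [hall] with n hn x hx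
  obtain ⟨p, hpt, hxp⟩ := Set.mem_iUnion₂.1 (ht hx)
  exact hn p hpt x (le_of_lt (by simpa [Real.dist_eq] using hxp))

/-- Paper Theorem 7.5: two everywhere S-continuous internal functions that
agree at all standard points pair infinitesimally against every test function,
i.e. they lie in the same pre-generalized function class. -/
theorem infinitesimal_pairing_of_sContinuous_eq_on_standard (f h : ℕ → ℝ → ℝ)
    (hflo : ∀ n, LocallyIntegrable (f n)) (hhlo : ∀ n, LocallyIntegrable (h n))
    (hSf : ∀ p : ℝ, SContinuousAt (↑f) p) (hSh : ∀ p : ℝ, SContinuousAt (↑h) p)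
    (heq : ∀ p : ℝ, hact (↑f) (↑p) = hact (↑h) (↑p))
    (g : ℝ → ℝ) (hg : ContDiff ℝ (⊤ : ℕ∞) g) (hgc : HasCompactSupport g) :
    (Hyperreal.ofSeq (fun n => ∫ x : ℝ, (f n x - h n x) * g x)).Infinitesimal := by
  rw [infinitesimal_ofSeq_iff]
  intro r hr
  set G : ℝ := ∫ x : ℝ, |g x| with hG
  have hGnn : 0 ≤ G := integral_nonneg fun x => abs_nonneg _
  have hgabs : Integrable (fun x : ℝ => |g x|) :=
    hg.continuous.abs.integrable_of_hasCompactSupport hgc.abs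
  set eps : ℝ := r / (G + 1) with heps
  have hepspos : 0 < eps := div_pos hr (by linarith)
  have hev := key_uniform f h hSf hSh heq (hgc : IsCompact (tsupport g)) hepspos
  filter_upwards [hev] with n hn
  have hint : Integrable (fun x : ℝ => (f n x - h n x) * g x) := by
    simpa [smul_eq_mul] using
      ((hflo n).sub (hhlo n)).integrable_smul_right_of_hasCompactSupport
        hg.continuous hgc
  have hbound : ∀ x : ℝ, |(f n x - h n x) * g x| ≤ eps * |g x| := by
    intro x
    by_cases hx : x ∈ tsupport g
    · rw [abs_mul]
      exact mul_le_mul_of_nonneg_right (hn x hx) (abs_nonneg _)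
    · simp [image_eq_zero_of_notMem_tsupport hx]
  calc |∫ x : ℝ, (f n x - h n x) * g x|
      ≤ ∫ x : ℝ, |(f n x - h n x) * g x| := by
        simpa [Real.norm_eq_abs, abs_mul] using
          norm_integral_le_integral_norm (μ := volume)
            (fun x : ℝ => (f n x - h n x) * g x)
    _ = ∫ x : ℝ, |f n x - h n x| * |g x| := by simp [abs_mul]
    _ ≤ ∫ x : ℝ, eps * |g x| :=
        integral_mono (by simpa [abs_mul] using hint.abs) (hgabs.const_mul eps) (fun x => by simpa [abs_mul] using hbound x)
    _ = eps * G := by rw [integral_const_mul]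
    _ < eps * (G + 1) := by nlinarith
    _ = r := by rw [heps]; field_simp
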